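/- arXiv:2107.10039 — 6 statements merged into one kernel-verified Lean document; each statement's English description precedes it below -/
import Mathlib

section
/- Let $c(\rho)=1+\alpha\rho$ with $\alpha\ge 0$, and let $\rho_1,\rho_2:[-1,1]\to[0,\rho_{\max}]$ be integrable with $\|\rho_2\|_{L^1}\le 2\rho_{\max}$. Suppose $\xi_1,\xi_2\in[-1,1]$ satisfy the turning-point relations $\int_{-1}^{\xi_i} c_i(\rho_i(x))\,dx = \int_{\xi_i}^{1} c_i(\rho_i(x))\,dx$ for $i=1,2$, where $c_i(\rho)=1+\alpha_i\rho$. Then $2|\xi_2-\xi_1| \le \int_{-1}^1 |\alpha_2\rho_2(x)-\alpha_1\rho_1(x)|\,dx$; in particular $|\xi_1-\xi_2| \le K(|\alpha_1-\alpha_2| + \|\rho_1-\rho_2\|_{L^1})$ for a constant $K$ depending only on $\max\{\alpha_1,\alpha_2\}$ and $\rho_{\max}$. -/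
open MeasureTheory intervalIntegral

lemma hughes_iI {ρ : ℝ → ℝ} (h : IntegrableOn ρ (Set.Icc (-1:ℝ) 1))
    {a b : ℝ} (ha : a ∈ Set.Icc (-1:ℝ) 1) (hb : b ∈ Set.Icc (-1:ℝ) 1) :
    IntervalIntegrable ρ volume a b :=
  (h.mono_set (Set.uIcc_subset_Icc ha hb)).intervalIntegrable

lemma hughes_rel {α : ℝ} {ρ : ℝ → ℝ} (h : IntegrableOn ρ (Set.Icc (-1:ℝ) 1))
    {ξ : ℝ} (hξ : ξ ∈ Set.Icc (-1:ℝ) 1)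
    (hrel : (∫ x in (-1:ℝ)..ξ, (1 + α * ρ x)) = ∫ x in ξ..(1:ℝ), (1 + α * ρ x)) :
    2 * ξ = α * ((∫ x in ξ..(1:ℝ), ρ x) - ∫ x in (-1:ℝ)..ξ, ρ x) := by
  have hm1 : (-1:ℝ) ∈ Set.Icc (-1:ℝ) 1 := Set.mem_Icc.mpr ⟨le_refl _, by norm_num⟩
  have hp1 : (1:ℝ) ∈ Set.Icc (-1:ℝ) 1 := Set.mem_Icc.mpr ⟨by norm_num, le_refl _⟩
  rw [intervalIntegral.integral_add intervalIntegrable_const ((hughes_iI h hm1 hξ).const_mul α),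
      intervalIntegral.integral_add intervalIntegrable_const ((hughes_iI h hξ hp1).const_mul α),
      intervalIntegral.integral_const, intervalIntegral.integral_const,
      intervalIntegral.integral_const_mul, intervalIntegral.integral_const_mul] at hrel
  simp only [smul_eq_mul, mul_one] at hrel
  ring_nf at hrel ⊢
  linarith

lemma hughes_main {α₁ α₂ : ℝ} (hα₂ : 0 ≤ α₂) {ρ₁ ρ₂ : ℝ → ℝ}
    (hint₁ : IntegrableOn ρ₁ (Set.Icc (-1:ℝ) 1))
    (hint₂ : IntegrableOn ρ₂ (Set.Icc (-1:ℝ) 1))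
    (hnn₂ : ∀ x ∈ Set.Icc (-1:ℝ) 1, 0 ≤ ρ₂ x)
    {ξ₁ ξ₂ : ℝ} (hξ₁ : ξ₁ ∈ Set.Icc (-1:ℝ) 1) (hξ₂ : ξ₂ ∈ Set.Icc (-1:ℝ) 1)
    (hle : ξ₁ ≤ ξ₂)
    (h₁ : 2 * ξ₁ = α₁ * ((∫ x in ξ₁..(1:ℝ), ρ₁ x) - ∫ x in (-1:ℝ)..ξ₁, ρ₁ x))
    (h₂ : 2 * ξ₂ = α₂ * ((∫ x in ξ₂..(1:ℝ), ρ₂ x) - ∫ x in (-1:ℝ)..ξ₂, ρ₂ x)) :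
    2 * (ξ₂ - ξ₁) ≤ ∫ x in (-1:ℝ)..1, |α₂ * ρ₂ x - α₁ * ρ₁ x| := by
  have hm1 : (-1:ℝ) ∈ Set.Icc (-1:ℝ) 1 := Set.mem_Icc.mpr ⟨le_refl _, by norm_num⟩
  have hp1 : (1:ℝ) ∈ Set.Icc (-1:ℝ) 1 := Set.mem_Icc.mpr ⟨by norm_num, le_refl _⟩
  set g : ℝ → ℝ := fun x => α₂ * ρ₂ x - α₁ * ρ₁ x with hg
  have hgint : IntegrableOn g (Set.Icc (-1:ℝ) 1) :=
    (hint₂.const_mul α₂).sub (hint₁.const_mul α₁)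
  have hgabs : IntegrableOn (fun x => |g x|) (Set.Icc (-1:ℝ) 1) := hgint.abs
  -- monotonicity of f₂
  have hsplit1 : (∫ x in ξ₁..ξ₂, ρ₂ x) + (∫ x in ξ₂..(1:ℝ), ρ₂ x)
      = ∫ x in ξ₁..(1:ℝ), ρ₂ x :=
    intervalIntegral.integral_add_adjacent_intervals (hughes_iI hint₂ hξ₁ hξ₂)
      (hughes_iI hint₂ hξ₂ hp1)
  have hsplit2 : (∫ x in (-1:ℝ)..ξ₁, ρ₂ x) + (∫ x in ξ₁..ξ₂, ρ₂ x)
      = ∫ x in (-1:ℝ)..ξ₂, ρ₂ x :=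
    intervalIntegral.integral_add_adjacent_intervals (hughes_iI hint₂ hm1 hξ₁)
      (hughes_iI hint₂ hξ₁ hξ₂)
  have hmid : 0 ≤ ∫ x in ξ₁..ξ₂, ρ₂ x := by
    apply intervalIntegral.integral_nonneg hle
    intro x hx
    exact hnn₂ x ⟨hξ₁.1.trans hx.1, hx.2.trans hξ₂.2⟩
  have hmono : (∫ x in ξ₂..(1:ℝ), ρ₂ x) - (∫ x in (-1:ℝ)..ξ₂, ρ₂ x)
      ≤ (∫ x in ξ₁..(1:ℝ), ρ₂ x) - (∫ x in (-1:ℝ)..ξ₁, ρ₂ x) := by linarith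
  have key : 2 * (ξ₂ - ξ₁)
      ≤ (∫ x in ξ₁..(1:ℝ), g x) - (∫ x in (-1:ℝ)..ξ₁, g x) := by
    have h2' : 2 * ξ₂ ≤ α₂ * ((∫ x in ξ₁..(1:ℝ), ρ₂ x) - ∫ x in (-1:ℝ)..ξ₁, ρ₂ x) :=
      h₂.le.trans (mul_le_mul_of_nonneg_left hmono hα₂)
    have e1 : (∫ x in ξ₁..(1:ℝ), g x)
        = α₂ * (∫ x in ξ₁..(1:ℝ), ρ₂ x) - α₁ * (∫ x in ξ₁..(1:ℝ), ρ₁ x) := by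
      rw [hg]
      rw [intervalIntegral.integral_sub ((hughes_iI hint₂ hξ₁ hp1).const_mul α₂)
        ((hughes_iI hint₁ hξ₁ hp1).const_mul α₁),
        intervalIntegral.integral_const_mul, intervalIntegral.integral_const_mul]
    have e2 : (∫ x in (-1:ℝ)..ξ₁, g x)
        = α₂ * (∫ x in (-1:ℝ)..ξ₁, ρ₂ x) - α₁ * (∫ x in (-1:ℝ)..ξ₁, ρ₁ x) := by
      rw [hg]
      rw [intervalIntegral.integral_sub ((hughes_iI hint₂ hm1 hξ₁).const_mul α₂)
        ((hughes_iI hint₁ hm1 hξ₁).const_mul α₁),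
        intervalIntegral.integral_const_mul, intervalIntegral.integral_const_mul]
    rw [e1, e2]
    nlinarith [h₁, h2']
  have b1 : (∫ x in ξ₁..(1:ℝ), g x) ≤ ∫ x in ξ₁..(1:ℝ), |g x| :=
    intervalIntegral.integral_mono_on hξ₁.2 (hughes_iI hgint hξ₁ hp1)
      (hughes_iI hgabs hξ₁ hp1) (fun x _ => le_abs_self _)
  have b2 : -(∫ x in (-1:ℝ)..ξ₁, g x) ≤ ∫ x in (-1:ℝ)..ξ₁, |g x| := by
    rw [← intervalIntegral.integral_neg]
    exact intervalIntegral.integral_mono_on hξ₁.1 ((hughes_iI hgint hm1 hξ₁).neg)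
      (hughes_iI hgabs hm1 hξ₁) (fun x _ => neg_le_abs _)
  have hsum : (∫ x in (-1:ℝ)..ξ₁, |g x|) + (∫ x in ξ₁..(1:ℝ), |g x|)
      = ∫ x in (-1:ℝ)..(1:ℝ), |g x| :=
    intervalIntegral.integral_add_adjacent_intervals (hughes_iI hgabs hm1 hξ₁)
      (hughes_iI hgabs hξ₁ hp1)
  calc 2 * (ξ₂ - ξ₁) ≤ (∫ x in ξ₁..(1:ℝ), g x) - (∫ x in (-1:ℝ)..ξ₁, g x) := key
    _ ≤ (∫ x in ξ₁..(1:ℝ), |g x|) + (∫ x in (-1:ℝ)..ξ₁, |g x|) := by linarith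
    _ = ∫ x in (-1:ℝ)..(1:ℝ), |g x| := by linarith [hsum]

/-- Stability of the turning point with respect to the cost parameter and the density,
for the linear cost `c(ρ) = 1 + α ρ` of the 1D Hughes model. -/
theorem stmt_0
    (ρmax α₁ α₂ : ℝ) (hρmax : 0 < ρmax) (hα₁ : 0 ≤ α₁) (hα₂ : 0 ≤ α₂)
    (ρ₁ ρ₂ : ℝ → ℝ)
    (hint₁ : IntegrableOn ρ₁ (Set.Icc (-1) 1))
    (hint₂ : IntegrableOn ρ₂ (Set.Icc (-1) 1))
    (hbd₁ : ∀ x ∈ Set.Icc (-1:ℝ) 1, ρ₁ x ∈ Set.Icc 0 ρmax)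
    (hbd₂ : ∀ x ∈ Set.Icc (-1:ℝ) 1, ρ₂ x ∈ Set.Icc 0 ρmax)
    (hL1 : (∫ x in Set.Icc (-1:ℝ) 1, |ρ₂ x|) ≤ 2 * ρmax)
    (ξ₁ ξ₂ : ℝ) (hξ₁ : ξ₁ ∈ Set.Icc (-1:ℝ) 1) (hξ₂ : ξ₂ ∈ Set.Icc (-1:ℝ) 1)
    (hrel₁ : (∫ x in (-1:ℝ)..ξ₁, (1 + α₁ * ρ₁ x)) = ∫ x in ξ₁..(1:ℝ), (1 + α₁ * ρ₁ x))
    (hrel₂ : (∫ x in (-1:ℝ)..ξ₂, (1 + α₂ * ρ₂ x)) = ∫ x in ξ₂..(1:ℝ), (1 + α₂ * ρ₂ x)) :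
    2 * |ξ₂ - ξ₁| ≤ (∫ x in (-1:ℝ)..1, |α₂ * ρ₂ x - α₁ * ρ₁ x|) ∧
    ∃ K : ℝ, 0 < K ∧ K = max α₁ α₂ + ρmax ∧
      |ξ₁ - ξ₂| ≤ K * (|α₁ - α₂| + ∫ x in (-1:ℝ)..1, |ρ₁ x - ρ₂ x|) := by
  have hm1 : (-1:ℝ) ∈ Set.Icc (-1:ℝ) 1 := Set.mem_Icc.mpr ⟨le_refl _, by norm_num⟩
  have hp1 : (1:ℝ) ∈ Set.Icc (-1:ℝ) 1 := Set.mem_Icc.mpr ⟨by norm_num, le_refl _⟩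
  have h₁ := hughes_rel hint₁ hξ₁ hrel₁
  have h₂ := hughes_rel hint₂ hξ₂ hrel₂
  have part1 : 2 * |ξ₂ - ξ₁| ≤ ∫ x in (-1:ℝ)..1, |α₂ * ρ₂ x - α₁ * ρ₁ x| := by
    rcases le_total ξ₁ ξ₂ with hle | hle
    · rw [abs_of_nonneg (by linarith)]
      exact hughes_main hα₂ hint₁ hint₂ (fun x hx => (hbd₂ x hx).1) hξ₁ hξ₂ hle h₁ h₂
    · rw [abs_of_nonpos (by linarith)]
      have := hughes_main hα₁ hint₂ hint₁ (fun x hx => (hbd₁ x hx).1) hξ₂ hξ₁ hle h₂ h₁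
      simpa [abs_sub_comm] using this
  refine ⟨part1, max α₁ α₂ + ρmax, by positivity, rfl, ?_⟩
  set A := |α₁ - α₂| with hA
  set B := ∫ x in (-1:ℝ)..1, |ρ₁ x - ρ₂ x| with hB
  have hBnn : 0 ≤ B :=
    intervalIntegral.integral_nonneg (by norm_num) (fun x _ => abs_nonneg _)
  have hAnn : 0 ≤ A := abs_nonneg _
  -- pointwise bound and integral comparison
  have hptint : IntervalIntegrable (fun x => |α₁ - α₂| * |ρ₂ x| + α₁ * |ρ₂ x - ρ₁ x|)
      volume (-1) 1 := by
    exact ((hughes_iI hint₂.abs hm1 hp1).const_mul _).add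
      ((hughes_iI (hint₂.sub hint₁).abs hm1 hp1).const_mul _)
  have hgabs : IntervalIntegrable (fun x => |α₂ * ρ₂ x - α₁ * ρ₁ x|) volume (-1) 1 :=
    hughes_iI ((hint₂.const_mul α₂).sub (hint₁.const_mul α₁)).abs hm1 hp1
  have hcomp : (∫ x in (-1:ℝ)..1, |α₂ * ρ₂ x - α₁ * ρ₁ x|)
      ≤ ∫ x in (-1:ℝ)..1, (|α₁ - α₂| * |ρ₂ x| + α₁ * |ρ₂ x - ρ₁ x|) := by
    refine intervalIntegral.integral_mono_on (by norm_num) hgabs hptint (fun x _ => ?_)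
    have : α₂ * ρ₂ x - α₁ * ρ₁ x = (α₂ - α₁) * ρ₂ x + α₁ * (ρ₂ x - ρ₁ x) := by ring
    rw [this]
    calc |(α₂ - α₁) * ρ₂ x + α₁ * (ρ₂ x - ρ₁ x)|
        ≤ |(α₂ - α₁) * ρ₂ x| + |α₁ * (ρ₂ x - ρ₁ x)| := abs_add_le _ _
      _ = |α₂ - α₁| * |ρ₂ x| + |α₁| * |ρ₂ x - ρ₁ x| := by rw [abs_mul, abs_mul]
      _ = |α₁ - α₂| * |ρ₂ x| + α₁ * |ρ₂ x - ρ₁ x| := by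
          rw [abs_sub_comm, abs_of_nonneg hα₁]
  have hdint : IntervalIntegrable (fun x => |ρ₂ x - ρ₁ x|) volume (-1) 1 := by
    exact hughes_iI (hint₂.sub hint₁).abs hm1 hp1
  have hsplit : (∫ x in (-1:ℝ)..1, (|α₁ - α₂| * |ρ₂ x| + α₁ * |ρ₂ x - ρ₁ x|))
      = |α₁ - α₂| * (∫ x in (-1:ℝ)..1, |ρ₂ x|) + α₁ * (∫ x in (-1:ℝ)..1, |ρ₂ x - ρ₁ x|) := by
    rw [intervalIntegral.integral_add ((hughes_iI hint₂.abs hm1 hp1).const_mul _)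
      (hdint.const_mul _),
      intervalIntegral.integral_const_mul, intervalIntegral.integral_const_mul]
  have hρ₂L1 : (∫ x in (-1:ℝ)..1, |ρ₂ x|) ≤ 2 * ρmax := by
    rwa [intervalIntegral.integral_of_le (by norm_num), ← integral_Icc_eq_integral_Ioc]
  have hBeq : (∫ x in (-1:ℝ)..1, |ρ₂ x - ρ₁ x|) = B := by
    simp only [hB, abs_sub_comm]
  have hM : α₁ ≤ max α₁ α₂ := le_max_left _ _
  have hMnn : 0 ≤ max α₁ α₂ := le_trans hα₁ hM
  have hD : 2 * |ξ₂ - ξ₁| ≤ A * (2 * ρmax) + α₁ * B := by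
    calc 2 * |ξ₂ - ξ₁| ≤ _ := part1
      _ ≤ _ := hcomp
      _ = A * (∫ x in (-1:ℝ)..1, |ρ₂ x|) + α₁ * B := by rw [hsplit, hBeq]
      _ ≤ A * (2 * ρmax) + α₁ * B := by
          have := mul_le_mul_of_nonneg_left hρ₂L1 hAnn
          linarith
  rw [abs_sub_comm]
  nlinarith [mul_nonneg hMnn hBnn, mul_nonneg hMnn hAnn, mul_nonneg hρmax.le hBnn,
    mul_nonneg hρmax.le hAnn, mul_le_mul_of_nonneg_right hM hBnn]
end

section
/- (Discrete maximum principle for follow-the-leader.) Let $v:[0,\rho_{\max}]\to[0,v_{\max}]$ be Lipschitz, nonincreasing, $v(\rho_{\max})=0$. Consider particles $x_0,\dots,x_n$ evolving on $[0,T]$ by the rightward follow-the-leader system $\dot x_n=v_{\max}$, $\dot x_i = v(\ell/(x_{i+1}-x_i))$ for $i<n$, with initial gaps $x_{i+1}(0)-x_i(0)\ge \ell/R_{\max}$ for some $R_{\max}\le\rho_{\max}$. Then for all $t\in[0,T]$ and all $i$, $x_{i+1}(t)-x_i(t)\ge \ell/R_{\max}$; equivalently, the discrete densities satisfy $R_{i+1/2}(t)\le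 R_{\max}$. -/
/-!
Write `m = ℓ / Rmax`. Each gap `g = x (i+1) - x i` satisfies `g' = w - v (ℓ / g)`, where `w` is
the leader's speed. Arguing from the front of the platoon backwards, the leader's gap is already
at least `m` (or the leader is `x n`, with speed `vmax = v 0`), so by monotonicity of `v` we get
`w ≥ v Rmax`. Hence, while `m / 2 ≤ g ≤ m`, the Lipschitz bound gives
`g' ≥ v Rmax - v (ℓ / g) ≥ -C (m - g)`, and a Gronwall-type barrier argument shows that `g` can
never drop below `m`.
-/

open Set Filter Topology Real NNReal

theorem le_of_hasDerivWithinAt_of_ge_neg_mul_near {g g' : ℝ → ℝ} {a b m r C : ℝ} (hr : 0 < r)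
    (hg : ContinuousOn g (Icc a b)) (hg' : ∀ t ∈ Ico a b, HasDerivWithinAt g (g' t) (Ici t) t)
    (ha : m ≤ g a) (bound : ∀ t ∈ Ico a b, m - r ≤ g t → g t < m → -(C * (m - g t)) ≤ g' t) :
    ∀ ⦃t⦄, t ∈ Icc a b → m ≤ g t := by
  intro t ht
  set k := |C| + 1
  set E := exp (k * (b - a))
  have fence : ∀ ε ∈ Ioo 0 (r / E), m - g t ≤ ε * exp (k * (t - a)) := by
    rintro ε ⟨hε, hεr⟩
    -- `m - g` can only touch the barrier where `0 < m - g ≤ r`; there its slope is at most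
    -- `C (m - g)`, strictly below the barrier's slope `k (m - g)`.
    refine image_le_of_deriv_right_lt_deriv_boundary' (f := fun s => m - g s)
      (f' := fun s => -g' s) (B := fun s => ε * exp (k * (s - a)))
      (B' := fun s => k * (ε * exp (k * (s - a)))) (continuousOn_const.sub hg)
      (fun s hs => (hg' s hs).const_sub m) ?_ (by fun_prop) (fun s _ => ?_) ?_ ht
    · simp only [sub_self, mul_zero, exp_zero, mul_one]
      linarith
    · have h := (((hasDerivAt_id' s).sub_const a).const_mul k).exp.const_mul ε
      exact (h.congr_deriv (by ring)).hasDerivWithinAt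
    · rintro s ⟨hs, hsb⟩ hfs
      have hB : 0 < ε * exp (k * (s - a)) := by positivity
      have hBr : ε * exp (k * (s - a)) ≤ r := by
        have : exp (k * (s - a)) ≤ E := exp_le_exp.2 (by gcongr)
        calc ε * exp (k * (s - a)) ≤ ε * E := by gcongr
          _ ≤ r := by rw [lt_div_iff₀ (exp_pos _)] at hεr; linarith
      have hC : C * (m - g s) < k * (ε * exp (k * (s - a))) := by
        rw [hfs]; exact mul_lt_mul_of_pos_right (by linarith [le_abs_self C]) hB
      have := bound s ⟨hs, hsb⟩ (by linarith) (by linarith)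
      linarith
  have hlim : Tendsto (fun ε : ℝ => ε * exp (k * (t - a))) (𝓝[>] 0) (𝓝 0) := by
    simpa using ((tendsto_id (x := 𝓝 (0:ℝ))).mul_const (exp (k * (t - a)))).mono_left
      nhdsWithin_le_nhds
  have := ge_of_tendsto hlim (eventually_of_mem (Ioo_mem_nhdsGT (by positivity)) fence)
  linarith

theorem LipschitzWith.neg_mul_le_sub_apply_div {v : ℝ → ℝ} {K : ℝ≥0} (hv : LipschitzWith K v)
    {ℓ R y : ℝ} (hℓ : 0 < ℓ) (hR : 0 < R) (hy : ℓ / R / 2 ≤ y) (hyℓ : y ≤ ℓ / R) :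
    -(2 * K * R ^ 2 / ℓ * (ℓ / R - y)) ≤ v R - v (ℓ / y) := by
  have hy0 : 0 < y := lt_of_lt_of_le (by positivity) hy
  have hRy : R * y ≤ ℓ := by rwa [le_div_iff₀ hR, mul_comm] at hyℓ
  have hyR : ℓ ≤ 2 * R * y := by
    rw [div_div, div_le_iff₀ (by positivity)] at hy; linarith
  have hR_le : R ≤ ℓ / y := by rwa [le_div_iff₀ hy0]
  have hlip : v (ℓ / y) - v R ≤ K * (ℓ / y - R) := by
    have := (le_abs_self _).trans (hv.dist_le_mul (ℓ / y) R)
    rwa [Real.dist_eq, abs_of_nonneg (sub_nonneg.2 hR_le)] at this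
  have hgap : ℓ / y - R ≤ 2 * R ^ 2 / ℓ * (ℓ / R - y) := by
    rw [div_sub' hy0.ne', div_sub' hR.ne', div_mul_div_comm, div_le_div_iff₀ hy0 (by positivity)]
    nlinarith [mul_nonneg (sub_nonneg.2 hRy) (sub_nonneg.2 hyR)]
  calc -(2 * K * R ^ 2 / ℓ * (ℓ / R - y)) = -(K * (2 * R ^ 2 / ℓ * (ℓ / R - y))) := by ring
    _ ≤ -(K * (ℓ / y - R)) := neg_le_neg (mul_le_mul_of_nonneg_left hgap K.coe_nonneg)
    _ ≤ v R - v (ℓ / y) := by linarith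

theorem follower_gap_ge {v : ℝ → ℝ} {K : ℝ≥0} (hv : LipschitzWith K v) {ℓ R a b : ℝ}
    (hℓ : 0 < ℓ) (hR : 0 < R) {y z w : ℝ → ℝ}
    (hy : ∀ t ∈ Icc a b, HasDerivAt y (v (ℓ / (z t - y t))) t)
    (hz : ∀ t ∈ Icc a b, HasDerivAt z (w t) t) (hw : ∀ t ∈ Icc a b, v R ≤ w t)
    (ha : ℓ / R ≤ z a - y a) : ∀ t ∈ Icc a b, ℓ / R ≤ z t - y t := by
  have hd : ∀ t ∈ Icc a b, HasDerivAt (fun s => z s - y s) (w t - v (ℓ / (z t - y t))) t :=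
    fun t ht => (hz t ht).sub (hy t ht)
  intro t ht
  refine le_of_hasDerivWithinAt_of_ge_neg_mul_near (C := 2 * K * R ^ 2 / ℓ) (r := ℓ / R / 2)
    (by positivity) (fun s hs => (hd s hs).continuousAt.continuousWithinAt)
    (fun s hs => (hd s (Ico_subset_Icc_self hs)).hasDerivWithinAt) ha (fun s hs hlo hhi => ?_) ht
  have := hv.neg_mul_le_sub_apply_div hℓ hR (by linarith) hhi.le
  linarith [hw s (Ico_subset_Icc_self hs)]

theorem stmt_5_general (n : ℕ) (ℓ Rmax ρmax vmax T : ℝ)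
    (hℓ : 0 < ℓ) (hRmax : 0 < Rmax) (hRρ : Rmax ≤ ρmax)
    (v : ℝ → ℝ) (K : NNReal) (hvLip : LipschitzWith K v)
    (hv_anti : AntitoneOn v (Set.Icc 0 ρmax))
    (hv0 : v 0 = vmax)
    (x : ℕ → ℝ → ℝ)
    (hdn : ∀ t ∈ Set.Icc 0 T, HasDerivAt (x n) vmax t)
    (hdi : ∀ i < n, ∀ t ∈ Set.Icc 0 T, HasDerivAt (x i) (v (ℓ / (x (i+1) t - x i t))) t)
    (hinit : ∀ i < n, ℓ / Rmax ≤ x (i+1) 0 - x i 0) :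
    ∀ t ∈ Set.Icc 0 T, ∀ i < n, ℓ / Rmax ≤ x (i+1) t - x i t := by
  have hm : 0 < ℓ / Rmax := by positivity
  have hvR : ∀ ρ ∈ Icc 0 Rmax, v Rmax ≤ v ρ := fun ρ hρ =>
    hv_anti ⟨hρ.1, hρ.2.trans hRρ⟩ ⟨hRmax.le, hRρ⟩ hρ.2
  suffices h : ∀ i < n, ∀ t ∈ Icc 0 T, ℓ / Rmax ≤ x (i + 1) t - x i t from
    fun t ht i hi => h i hi t ht
  refine fun i hi => Nat.decreasingInduction
    (motive := fun i _ => i < n → ∀ t ∈ Icc 0 T, ℓ / Rmax ≤ x (i + 1) t - x i t)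
    (fun i hi ih _ => ?_) (fun h => absurd h (lt_irrefl n)) hi.le hi
  rcases (Nat.succ_le_of_lt hi).eq_or_lt with hlast | hnext
  · subst hlast
    exact follower_gap_ge hvLip hℓ hRmax (hdi i hi) hdn
      (fun _ _ => hv0 ▸ hvR 0 ⟨le_rfl, hRmax.le⟩) (hinit i hi)
  · refine follower_gap_ge hvLip hℓ hRmax (hdi i hi) (hdi (i + 1) hnext)
      (fun t ht => hvR _ ⟨?_, ?_⟩) (hinit i hi)
    all_goals have hgap := ih hnext t ht
    · exact div_nonneg hℓ.le (hm.le.trans hgap)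
    · exact (div_le_comm₀ (hm.trans_le hgap) hRmax).2 hgap

/-- Discrete maximum principle for the rightward follow-the-leader system:
if the initial gaps are at least `ℓ / Rmax`, then they remain so for all times,
i.e. the discrete densities stay bounded by `Rmax`. -/
theorem stmt_5 (n : ℕ) (ℓ Rmax ρmax vmax T : ℝ)
    (hℓ : 0 < ℓ) (hRmax : 0 < Rmax) (hRρ : Rmax ≤ ρmax) (hT : 0 ≤ T)
    (v : ℝ → ℝ) (K : NNReal) (hvLip : LipschitzWith K v)
    (hv_anti : AntitoneOn v (Set.Icc 0 ρmax))
    (hv_nonneg : ∀ r ∈ Set.Icc (0:ℝ) ρmax, 0 ≤ v r)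
    (hvρmax : v ρmax = 0) (hv0 : v 0 = vmax)
    (x : ℕ → ℝ → ℝ)
    (hdn : ∀ t ∈ Set.Icc 0 T, HasDerivAt (x n) vmax t)
    (hdi : ∀ i < n, ∀ t ∈ Set.Icc 0 T, HasDerivAt (x i) (v (ℓ / (x (i+1) t - x i t))) t)
    (hinit : ∀ i < n, ℓ / Rmax ≤ x (i+1) 0 - x i 0) :
    ∀ t ∈ Set.Icc 0 T, ∀ i < n, ℓ / Rmax ≤ x (i+1) t - x i t :=
  stmt_5_general n ℓ Rmax ρmax vmax T hℓ hRmax hRρ v K hvLip hv_anti hv0 x hdn hdi hinit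
end

section
/- Let $x_0,\dots,x_n:[0,\infty)\to\mathbb{R}$ be Lipschitz with constant $v_{\max}$ (particle paths), and with gaps bounded below by $\ell/R_{\max}$. Define the pseudo-inverse $X(t,z)=x_i(t)+(z-i\ell)\,(x_{i+1}(t)-x_i(t))/\ell$ for $z\in[i\ell,(i+1)\ell]$, $i=0,\dots,n-1$, $\ell=L/n$. Then for all $0\le s\le t$, $\int_0^L |X(t,z)-X(s,z)|\,dz \le 2 L\, v_{\max}\,(t-s)$. (Uniform Lipschitz-in-time estimate in the 1-Wasserstein distance for the empirical densities.) -/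
/-!
On the `i`-th cell `[iℓ, (i+1)ℓ]` the pseudo-inverses at times `t` and `s` are both affine in `z`,
so their difference is the affine interpolation between the particle displacements
`x i t - x i s` and `x (i+1) t - x (i+1) s`. Each displacement is at most `vmax (t - s)` by the
Lipschitz bound, hence so is the interpolation, and integrating over the `n` cells of total
length `L` gives `L vmax (t - s)`, which is the claim with a factor `2` to spare.
-/

open intervalIntegral Set

theorem abs_add_mul_sub_le {a b θ C : ℝ} (hθ₀ : 0 ≤ θ) (hθ₁ : θ ≤ 1)
    (ha : |a| ≤ C) (hb : |b| ≤ C) : |a + θ * (b - a)| ≤ C := by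
  rw [abs_le] at ha hb ⊢
  constructor <;> nlinarith

theorem abs_le_of_eqOn_affine {F : ℝ → ℝ} {p ℓ a b C : ℝ} (hℓ : 0 < ℓ)
    (hF : ∀ z ∈ Icc p (p + ℓ), F z = a + (z - p) * (b - a) / ℓ)
    (ha : |a| ≤ C) (hb : |b| ≤ C) : ∀ z ∈ Icc p (p + ℓ), |F z| ≤ C := by
  intro z hz
  have hθ₁ : (z - p) / ℓ ≤ 1 := (div_le_one hℓ).2 (by linarith [hz.2])
  rw [hF z hz, mul_comm, mul_div_assoc, mul_comm]
  exact abs_add_mul_sub_le (div_nonneg (by linarith [hz.1]) hℓ.le) hθ₁ ha hb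

theorem integral_le_of_le_on_cells {f : ℝ → ℝ} {n : ℕ} {ℓ C : ℝ} (hℓ : 0 ≤ ℓ)
    (hcont : ∀ i < n, ContinuousOn f (Icc (i * ℓ) (i * ℓ + ℓ)))
    (hle : ∀ i < n, ∀ z ∈ Icc ((i : ℝ) * ℓ) (i * ℓ + ℓ), f z ≤ C) :
    ∫ z in (0 : ℝ)..n * ℓ, f z ≤ n * ℓ * C := by
  have hcell : ∀ i : ℕ, ((i + 1 : ℕ) : ℝ) * ℓ = i * ℓ + ℓ := fun i => by push_cast; ring
  have hint : ∀ i < n, IntervalIntegrable f MeasureTheory.volume (i * ℓ) ((i + 1 : ℕ) * ℓ) :=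
    fun i hi => by
      rw [hcell]
      exact (hcont i hi).intervalIntegrable_of_Icc (by linarith)
  have hcell_le : ∀ i ∈ Finset.range n, ∫ z in (i : ℝ) * ℓ..((i + 1 : ℕ) : ℝ) * ℓ, f z ≤ ℓ * C :=
    fun i hi => by
      have hi := Finset.mem_range.1 hi
      calc ∫ z in (i : ℝ) * ℓ..((i + 1 : ℕ) : ℝ) * ℓ, f z
          ≤ ∫ _ in (i : ℝ) * ℓ..((i + 1 : ℕ) : ℝ) * ℓ, C :=
            integral_mono_on (by rw [hcell]; linarith) (hint i hi) intervalIntegrable_const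
              (by rw [hcell]; exact hle i hi)
        _ = ℓ * C := by rw [integral_const, hcell, smul_eq_mul]; ring_nf
  calc ∫ z in (0 : ℝ)..n * ℓ, f z
      = ∑ i ∈ Finset.range n, ∫ z in (i : ℝ) * ℓ..((i + 1 : ℕ) : ℝ) * ℓ, f z := by
        rw [sum_integral_adjacent_intervals (a := fun i : ℕ => (i : ℝ) * ℓ) hint]
        simp
    _ ≤ ∑ _i ∈ Finset.range n, ℓ * C := Finset.sum_le_sum hcell_le
    _ = n * ℓ * C := by simp [mul_assoc]

theorem stmt_6_general (n : ℕ) (hn : 0 < n) (L vmax : ℝ)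
    (hL : 0 < L)
    (x : ℕ → ℝ → ℝ)
    (hLip : ∀ i ≤ n, ∀ s t : ℝ, |x i t - x i s| ≤ vmax * |t - s|)
    (X : ℝ → ℝ → ℝ)
    (hX : ∀ t : ℝ, ∀ i < n, ∀ z ∈ Set.Icc ((i:ℝ) * (L / n)) (((i:ℝ)+1) * (L / n)),
      X t z = x i t + (z - i * (L / n)) * (x (i+1) t - x i t) / (L / n)) :
    ∀ s t : ℝ, 0 ≤ s → s ≤ t →
      (∫ z in (0:ℝ)..L, |X t z - X s z|) ≤ 2 * L * vmax * (t - s) := by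
  intro s t _ hst
  set ℓ := L / n
  have hℓ : 0 < ℓ := div_pos hL (Nat.cast_pos.2 hn)
  have hdisp : ∀ i ≤ n, |x i t - x i s| ≤ vmax * (t - s) := fun i hi => by
    simpa [abs_of_nonneg (sub_nonneg.2 hst)] using hLip i hi s t
  have hdiff : ∀ i < n, ∀ z ∈ Icc ((i : ℝ) * ℓ) (i * ℓ + ℓ), X t z - X s z =
      (x i t - x i s) + (z - i * ℓ) * ((x (i + 1) t - x (i + 1) s) - (x i t - x i s)) / ℓ := by
    intro i hi z hz
    rw [← add_one_mul] at hz
    rw [hX t i hi z hz, hX s i hi z hz]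
    ring
  have hcells : ∫ z in (0 : ℝ)..n * ℓ, |X t z - X s z| ≤ n * ℓ * (vmax * (t - s)) :=
    integral_le_of_le_on_cells hℓ.le
      (fun i hi => ((by fun_prop : Continuous fun z : ℝ => (x i t - x i s) + (z - i * ℓ) *
        ((x (i + 1) t - x (i + 1) s) - (x i t - x i s)) / ℓ).continuousOn.congr
          (hdiff i hi)).abs)
      (fun i hi => abs_le_of_eqOn_affine hℓ (hdiff i hi) (hdisp i hi.le) (hdisp (i + 1) hi))
  have hnℓ : (n : ℝ) * ℓ = L := mul_div_cancel₀ L (Nat.cast_ne_zero.2 hn.ne')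
  have hC : 0 ≤ vmax * (t - s) := (abs_nonneg _).trans (hdisp 0 n.zero_le)
  rw [hnℓ] at hcells
  nlinarith

/-- Uniform Lipschitz-in-time estimate in the 1-Wasserstein distance for the
empirical densities of the many-particle scheme, expressed through the
pseudo-inverse distribution functions. -/
theorem stmt_6 (n : ℕ) (hn : 0 < n) (L vmax Rmax : ℝ)
    (hL : 0 < L) (hvmax : 0 ≤ vmax) (hRmax : 0 < Rmax)
    (x : ℕ → ℝ → ℝ)
    (hLip : ∀ i ≤ n, ∀ s t : ℝ, |x i t - x i s| ≤ vmax * |t - s|)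
    (hgap : ∀ t : ℝ, ∀ i < n, (L / n) / Rmax ≤ x (i+1) t - x i t)
    (X : ℝ → ℝ → ℝ)
    (hX : ∀ t : ℝ, ∀ i < n, ∀ z ∈ Set.Icc ((i:ℝ) * (L / n)) (((i:ℝ)+1) * (L / n)),
      X t z = x i t + (z - i * (L / n)) * (x (i+1) t - x i t) / (L / n)) :
    ∀ s t : ℝ, 0 ≤ s → s ≤ t →
      (∫ z in (0:ℝ)..L, |X t z - X s z|) ≤ 2 * L * vmax * (t - s) :=
  stmt_6_general n hn L vmax hL x hLip X hX
end

section
/- Let $a<b$ and $s<t$. Let $x_0,\dots,x_n$ be Lipschitz particle paths with speed at most $v_{\max}$, gaps at least $\ell/R_{\max}$, and suppose no particle crosses $a$ or $b$ during $[s,t]$ (i.e., the indices $I_a,I_b$ with $x_{I_a-1}\le a<x_{I_a}$ and $x_{I_b}<b\le x_{I_b+1}$ are constant on $[s,t]$), with $I_a\ge 1$ or $I_b\le n-1$. Then the empirical density $\rho^n(t,x)=\sum_i \frac{\ell}{x_{i+1}(t)-x_i(t)}\mathbf 1_{[x_i(t),x_{i+1}(t))}(x)$ satisfies $\big|\int_a^b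 (\rho^n(t,x)-\rho^n(s,x))\,dx\big| \le 6\, v_{\max} R_{\max}\,(t-s)$. -/
/-!
Integrated over `[a, b]`, the empirical density is a sum over cells of
(length of the overlap of the cell with `[a, b]`) × `ℓ / (cell width)`. While no particle crosses
`a` or `b`, every cell inside `[a, b]` contributes exactly `ℓ` and every cell outside contributes
`0`, at all times; only the (at most two) cells containing `a` and `b` contribute a fraction
`ℓ * (u / w)` that changes. There `u` and `w` are differences of positions, so they move by at most
`vmax (t - s)` and `2 vmax (t - s)`, and `w ≥ ℓ / Rmax`; hence each such fraction moves by at most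
`3 vmax Rmax (t - s)`.
-/

open MeasureTheory
open scoped Finset

noncomputable def empiricalDensity (ℓ : ℝ) (n : ℕ) (x : ℕ → ℝ) (y : ℝ) : ℝ :=
  ∑ i ∈ Finset.range n, if x i ≤ y ∧ y < x (i + 1) then ℓ / (x (i + 1) - x i) else 0

/-- `max (min b (x (i + 1)) - max a (x i)) 0` is the length of `[a, b] ∩ [x i, x (i + 1))`. -/
noncomputable def cellMass (ℓ a b : ℝ) (x : ℕ → ℝ) (i : ℕ) : ℝ :=
  max (min b (x (i + 1)) - max a (x i)) 0 * (ℓ / (x (i + 1) - x i))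

def BoundaryIndices (n : ℕ) (a b : ℝ) (x : ℕ → ℝ) (Ia Ib : ℕ) : Prop :=
  (1 ≤ Ia → x (Ia - 1) ≤ a) ∧ a < x Ia ∧ x Ib < b ∧ (Ib + 1 ≤ n → b ≤ x (Ib + 1))

lemma integral_indicator_Ico_const {a b : ℝ} (hab : a ≤ b) (c d k : ℝ) :
    ∫ y in a..b, (Set.Ico c d).indicator (fun _ ↦ k) y = max (min b d - max a c) 0 * k := by
  rw [intervalIntegral.integral_of_le hab, setIntegral_indicator measurableSet_Ico,
    setIntegral_const, smul_eq_mul, measureReal_def,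
    measure_congr ((ae_eq_refl _).inter Ico_ae_eq_Ioc), Set.Ioc_inter_Ioc, Real.volume_Ioc,
    ENNReal.toReal_ofReal']

lemma intervalIntegrable_indicator_Ico_const (a b c d k : ℝ) :
    IntervalIntegrable ((Set.Ico c d).indicator fun _ ↦ k) volume a b := by
  constructor <;> exact (integrableOn_const measure_Ioc_lt_top.ne).indicator measurableSet_Ico

section EmpiricalDensity

variable {ℓ a b : ℝ} {n : ℕ} {x : ℕ → ℝ}

lemma empiricalDensity_eq_sum_indicator :
    empiricalDensity ℓ n x =
      ∑ i ∈ Finset.range n,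
        (Set.Ico (x i) (x (i + 1))).indicator fun _ ↦ ℓ / (x (i + 1) - x i) := by
  ext y
  simp [empiricalDensity, Set.indicator_apply]

lemma intervalIntegrable_empiricalDensity :
    IntervalIntegrable (empiricalDensity ℓ n x) volume a b := by
  rw [empiricalDensity_eq_sum_indicator]
  exact IntervalIntegrable.sum _ fun i _ ↦ intervalIntegrable_indicator_Ico_const ..

lemma integral_empiricalDensity (hab : a ≤ b) :
    ∫ y in a..b, empiricalDensity ℓ n x y = ∑ i ∈ Finset.range n, cellMass ℓ a b x i := by
  simp_rw [empiricalDensity_eq_sum_indicator, Finset.sum_apply]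
  rw [intervalIntegral.integral_finsetSum fun i _ ↦ intervalIntegrable_indicator_Ico_const ..]
  simp_rw [integral_indicator_Ico_const hab, cellMass]

end EmpiricalDensity

lemma abs_div_sub_div_le {u₁ u₂ w₁ w₂ m : ℝ} (hm : 0 < m) (hu₂ : 0 ≤ u₂) (hu₂w : u₂ ≤ w₂)
    (hw₁ : m ≤ w₁) (hw₂ : m ≤ w₂) :
    |u₂ / w₂ - u₁ / w₁| ≤ (|u₂ - u₁| + |w₂ - w₁|) / m := by
  have hw₁0 : 0 < w₁ := hm.trans_le hw₁
  have hw₂0 : 0 < w₂ := hm.trans_le hw₂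
  have split : u₂ / w₂ - u₁ / w₁ = (u₂ - u₁) / w₁ + u₂ / w₂ * ((w₁ - w₂) / w₁) := by
    field_simp
    ring
  calc |u₂ / w₂ - u₁ / w₁|
      ≤ |u₂ - u₁| / w₁ + u₂ / w₂ * (|w₂ - w₁| / w₁) := by
        rw [split, abs_sub_comm w₂]
        refine (abs_add_le _ _).trans_eq ?_
        rw [abs_mul, abs_of_nonneg (div_nonneg hu₂ hw₂0.le), abs_div, abs_div, abs_of_pos hw₁0]
    _ ≤ |u₂ - u₁| / m + 1 * (|w₂ - w₁| / m) := by
        gcongr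
        exact div_le_one_of_le₀ hu₂w hw₂0.le
    _ = (|u₂ - u₁| + |w₂ - w₁|) / m := by ring

lemma abs_mul_div_sub_mul_div_le {ℓ R δ u₁ u₂ w₁ w₂ : ℝ} (hℓ : 0 < ℓ) (hR : 0 < R)
    (hu₂ : 0 ≤ u₂) (hu₂w : u₂ ≤ w₂) (hw₁ : ℓ / R ≤ w₁) (hw₂ : ℓ / R ≤ w₂)
    (hu : |u₂ - u₁| ≤ δ) (hw : |w₂ - w₁| ≤ 2 * δ) :
    |ℓ * (u₂ / w₂) - ℓ * (u₁ / w₁)| ≤ 3 * R * δ :=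
  calc |ℓ * (u₂ / w₂) - ℓ * (u₁ / w₁)| = ℓ * |u₂ / w₂ - u₁ / w₁| := by
        rw [← mul_sub, abs_mul, abs_of_pos hℓ]
    _ ≤ ℓ * ((δ + 2 * δ) / (ℓ / R)) := by
        gcongr
        exact (abs_div_sub_div_le (by positivity) hu₂ hu₂w hw₁ hw₂).trans (by gcongr)
    _ = 3 * R * δ := by
        field_simp
        ring

lemma abs_sum_le_two_mul_of_eq_zero {ι : Type*} [DecidableEq ι] {s : Finset ι} {f : ι → ℝ}
    {C : ℝ} (j k : ι) (hC : 0 ≤ C) (hzero : ∀ i ∈ s, i ≠ j → i ≠ k → f i = 0)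
    (hbound : ∀ i ∈ s, |f i| ≤ C) : |∑ i ∈ s, f i| ≤ 2 * C :=
  calc |∑ i ∈ s, f i| = |∑ i ∈ s ∩ {j, k}, f i| := by
        rw [Finset.sum_subset Finset.inter_subset_left fun i hi hni ↦ hzero i hi ?_ ?_] <;>
          rintro rfl <;> simp [hi] at hni
    _ ≤ ∑ i ∈ s ∩ {j, k}, |f i| := Finset.abs_sum_le_sum_abs _ _
    _ ≤ #(s ∩ {j, k}) • C :=
        Finset.sum_le_card_nsmul _ _ _ fun i hi ↦ hbound i (Finset.mem_inter.1 hi).1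
    _ ≤ 2 • C := nsmul_le_nsmul_left hC
        ((Finset.card_le_card Finset.inter_subset_right).trans Finset.card_le_two)
    _ = 2 * C := two_nsmul C |>.trans (two_mul C).symm

section Cells

variable {ℓ a b : ℝ} {x : ℕ → ℝ} {i : ℕ}

lemma cellMass_eq_zero_of_le_left (h : x (i + 1) ≤ a) : cellMass ℓ a b x i = 0 := by
  rw [cellMass, max_eq_right, zero_mul]
  linarith [min_le_right b (x (i + 1)), le_max_left a (x i)]

lemma cellMass_eq_zero_of_right_le (h : b ≤ x i) : cellMass ℓ a b x i = 0 := by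
  rw [cellMass, max_eq_right, zero_mul]
  linarith [min_le_left b (x (i + 1)), le_max_right a (x i)]

lemma cellMass_eq_of_le_of_le (ha : a ≤ x i) (hx : x i < x (i + 1)) (hb : x (i + 1) ≤ b) :
    cellMass ℓ a b x i = ℓ := by
  rw [cellMass, min_eq_right hb, max_eq_right ha, max_eq_left (sub_nonneg.2 hx.le),
    mul_div_cancel₀ _ (sub_pos.2 hx).ne']

lemma cellMass_eq_of_le_left (hxa : x i ≤ a) (hax : a ≤ x (i + 1)) (hb : x (i + 1) ≤ b) :
    cellMass ℓ a b x i = ℓ * ((x (i + 1) - a) / (x (i + 1) - x i)) := by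
  rw [cellMass, min_eq_right hb, max_eq_left hxa, max_eq_left (sub_nonneg.2 hax)]
  ring

lemma cellMass_eq_of_right_le (ha : a ≤ x i) (hxb : x i ≤ b) (hbx : b ≤ x (i + 1)) :
    cellMass ℓ a b x i = ℓ * ((b - x i) / (x (i + 1) - x i)) := by
  rw [cellMass, min_eq_left hbx, max_eq_right ha, max_eq_left (sub_nonneg.2 hxb)]
  ring

end Cells

section Configuration

variable {n Ia Ib : ℕ} {ℓ a b : ℝ}

lemma le_of_forall_lt_succ {x : ℕ → ℝ} (hx : ∀ i < n, x i < x (i + 1)) {i j : ℕ} (hij : i ≤ j)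
    (hj : j ≤ n) : x i ≤ x j :=
  (strictMonoOn_Iic_of_lt_succ fun m hm ↦ by simpa using hx m hm).monotoneOn
    (Set.mem_Iic.2 (hij.trans hj)) (Set.mem_Iic.2 hj) hij

lemma cellMass_eq_of_ne_boundary {x : ℕ → ℝ} (hx : ∀ i < n, x i < x (i + 1)) (hIab : Ia ≤ Ib)
    (hIbn : Ib ≤ n) (hI : BoundaryIndices n a b x Ia Ib) {i : ℕ} (hi : i < n) (hia : i + 1 ≠ Ia)
    (hib : i ≠ Ib) : cellMass ℓ a b x i = if Ia ≤ i ∧ i < Ib then ℓ else 0 := by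
  obtain ⟨hleft, ha, hb, hright⟩ := hI
  have mono {i j : ℕ} (hij : i ≤ j) (hj : j ≤ n) : x i ≤ x j := le_of_forall_lt_succ hx hij hj
  rcases lt_or_ge (i + 1) Ia with hleft_of_a | hIai
  · rw [if_neg (by omega)]
    exact cellMass_eq_zero_of_le_left ((mono (by omega) (by omega)).trans (hleft (by omega)))
  rcases lt_or_ge i Ib with hiIb | hright_of_b
  · rw [if_pos ⟨by omega, hiIb⟩]
    exact cellMass_eq_of_le_of_le (ha.le.trans (mono (by omega) (by omega))) (hx i hi)
      ((mono hiIb hIbn).trans hb.le)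
  · rw [if_neg (by omega)]
    exact cellMass_eq_zero_of_right_le ((hright (by omega)).trans (mono (by omega) hi.le))

lemma abs_cellMass_sub_le_of_boundary {R δ : ℝ} {y z : ℕ → ℝ} (hℓ : 0 < ℓ) (hR : 0 < R)
    (hy : ∀ i < n, y i < y (i + 1)) (hz : ∀ i < n, z i < z (i + 1)) (hIab : Ia ≤ Ib)
    (hIbn : Ib ≤ n) (hIy : BoundaryIndices n a b y Ia Ib) (hIz : BoundaryIndices n a b z Ia Ib)
    (hgy : ∀ i < n, ℓ / R ≤ y (i + 1) - y i) (hgz : ∀ i < n, ℓ / R ≤ z (i + 1) - z i)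
    (hyz : ∀ j ≤ n, |z j - y j| ≤ δ) {i : ℕ} (hi : i < n) (hbd : i + 1 = Ia ∨ i = Ib) :
    |cellMass ℓ a b z i - cellMass ℓ a b y i| ≤ 3 * R * δ := by
  have gap_close : |(z (i + 1) - z i) - (y (i + 1) - y i)| ≤ 2 * δ :=
    calc |(z (i + 1) - z i) - (y (i + 1) - y i)| = |(z (i + 1) - y (i + 1)) - (z i - y i)| := by
          ring_nf
      _ ≤ |z (i + 1) - y (i + 1)| + |z i - y i| := abs_sub _ _
      _ ≤ δ + δ := add_le_add (hyz _ (by omega)) (hyz _ hi.le)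
      _ = 2 * δ := (two_mul δ).symm
  obtain ⟨hly, hay, hby, hry⟩ := hIy
  obtain ⟨hlz, haz, hbz, hrz⟩ := hIz
  rcases hbd with rfl | rfl
  · have hyi : y i ≤ a := by simpa using hly (by omega)
    have hzi : z i ≤ a := by simpa using hlz (by omega)
    rw [cellMass_eq_of_le_left hzi haz.le ((le_of_forall_lt_succ hz hIab hIbn).trans hbz.le),
      cellMass_eq_of_le_left hyi hay.le ((le_of_forall_lt_succ hy hIab hIbn).trans hby.le)]
    refine abs_mul_div_sub_mul_div_le hℓ hR (by linarith) (by linarith)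
      (hgy i hi) (hgz i hi) ?_ gap_close
    rw [sub_sub_sub_cancel_right]
    exact hyz _ hi
  · rw [cellMass_eq_of_right_le (haz.le.trans (le_of_forall_lt_succ hz hIab hIbn)) hbz.le (hrz hi),
      cellMass_eq_of_right_le (hay.le.trans (le_of_forall_lt_succ hy hIab hIbn)) hby.le (hry hi)]
    refine abs_mul_div_sub_mul_div_le hℓ hR (by linarith) (by linarith [hrz hi])
      (hgy i hi) (hgz i hi) ?_ gap_close
    rw [sub_sub_sub_cancel_left, abs_sub_comm]
    exact hyz _ hIbn

end Configuration

open intervalIntegral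

theorem stmt_7_general (n : ℕ) (ℓ vmax Rmax a b s t : ℝ)
    (hℓ : 0 < ℓ) (hvmax : 0 ≤ vmax) (hRmax : 0 < Rmax)
    (hab : a < b) (hst : s < t)
    (x : ℕ → ℝ → ℝ)
    (hmono : ∀ τ : ℝ, ∀ i < n, x i τ < x (i+1) τ)
    (hLip : ∀ i ≤ n, ∀ τ₁ τ₂ : ℝ, |x i τ₁ - x i τ₂| ≤ vmax * |τ₁ - τ₂|)
    (hgap : ∀ τ ∈ Set.Icc s t, ∀ i < n, ℓ / Rmax ≤ x (i+1) τ - x i τ)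
    (Ia Ib : ℕ) (hIab : Ia ≤ Ib) (hIbn : Ib ≤ n)
    (hno_cross : ∀ τ ∈ Set.Icc s t,
      (1 ≤ Ia → x (Ia - 1) τ ≤ a) ∧ a < x Ia τ ∧ x Ib τ < b ∧
      (Ib + 1 ≤ n → b ≤ x (Ib + 1) τ))
    (ρn : ℝ → ℝ → ℝ)
    (hρn : ∀ τ y, ρn τ y = ∑ i ∈ Finset.range n,
      if x i τ ≤ y ∧ y < x (i+1) τ then ℓ / (x (i+1) τ - x i τ) else 0) :
    |∫ y in a..b, (ρn t y - ρn s y)| ≤ 6 * vmax * Rmax * (t - s) := by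
  have hs : s ∈ Set.Icc s t := Set.left_mem_Icc.2 hst.le
  have ht : t ∈ Set.Icc s t := Set.right_mem_Icc.2 hst.le
  have hρ (τ : ℝ) : ρn τ = empiricalDensity ℓ n (x · τ) := funext (hρn τ)
  have hclose : ∀ j ≤ n, |x j t - x j s| ≤ vmax * (t - s) := fun j hj ↦ by
    simpa [abs_of_pos (sub_pos.2 hst)] using hLip j hj t s
  set C := 3 * Rmax * (vmax * (t - s))
  have hC : 0 ≤ C := by have := sub_pos.2 hst; positivity
  have hinterior (i : ℕ) (hi : i < n) (hia : i + 1 ≠ Ia) (hib : i ≠ Ib) :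
      cellMass ℓ a b (x · t) i - cellMass ℓ a b (x · s) i = 0 := by
    rw [cellMass_eq_of_ne_boundary (hmono t) hIab hIbn (hno_cross t ht) hi hia hib,
      cellMass_eq_of_ne_boundary (hmono s) hIab hIbn (hno_cross s hs) hi hia hib, sub_self]
  have hbound (i : ℕ) (hi : i < n) :
      |cellMass ℓ a b (x · t) i - cellMass ℓ a b (x · s) i| ≤ C := by
    by_cases hbd : i + 1 = Ia ∨ i = Ib
    · exact abs_cellMass_sub_le_of_boundary hℓ hRmax (hmono s) (hmono t) hIab hIbn
        (hno_cross s hs) (hno_cross t ht) (hgap s hs) (hgap t ht) hclose hi hbd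
    · obtain ⟨hia, hib⟩ := not_or.1 hbd
      rw [hinterior i hi hia hib, abs_zero]
      exact hC
  rw [integral_sub (hρ t ▸ intervalIntegrable_empiricalDensity)
      (hρ s ▸ intervalIntegrable_empiricalDensity), hρ, hρ, integral_empiricalDensity hab.le,
    integral_empiricalDensity hab.le, ← Finset.sum_sub_distrib]
  refine (abs_sum_le_two_mul_of_eq_zero (Ia - 1) Ib hC
    (fun i hi hia hib ↦ hinterior i (Finset.mem_range.1 hi) (by omega) hib)
    (fun i hi ↦ hbound i (Finset.mem_range.1 hi))).trans_eq ?_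
  ring

/-- If no particle crosses `a` or `b` during `[s,t]`, the mass of the empirical
density in `[a,b]` varies at most like `6 vmax Rmax (t-s)`. -/
theorem stmt_7 (n : ℕ) (ℓ vmax Rmax a b s t : ℝ)
    (hℓ : 0 < ℓ) (hvmax : 0 ≤ vmax) (hRmax : 0 < Rmax)
    (hab : a < b) (hst : s < t)
    (x : ℕ → ℝ → ℝ)
    (hmono : ∀ τ : ℝ, ∀ i < n, x i τ < x (i+1) τ)
    (hLip : ∀ i ≤ n, ∀ τ₁ τ₂ : ℝ, |x i τ₁ - x i τ₂| ≤ vmax * |τ₁ - τ₂|)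
    (hgap : ∀ τ ∈ Set.Icc s t, ∀ i < n, ℓ / Rmax ≤ x (i+1) τ - x i τ)
    (Ia Ib : ℕ) (hIab : Ia ≤ Ib) (hIbn : Ib ≤ n)
    (hI : 1 ≤ Ia ∨ Ib + 1 ≤ n)
    (hno_cross : ∀ τ ∈ Set.Icc s t,
      (1 ≤ Ia → x (Ia - 1) τ ≤ a) ∧ a < x Ia τ ∧ x Ib τ < b ∧
      (Ib + 1 ≤ n → b ≤ x (Ib + 1) τ))
    (ρn : ℝ → ℝ → ℝ)
    (hρn : ∀ τ y, ρn τ y = ∑ i ∈ Finset.range n,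
      if x i τ ≤ y ∧ y < x (i+1) τ then ℓ / (x (i+1) τ - x i τ) else 0) :
    |∫ y in a..b, (ρn t y - ρn s y)| ≤ 6 * vmax * Rmax * (t - s) :=
  stmt_7_general n ℓ vmax Rmax a b s t hℓ hvmax hRmax hab hst x hmono hLip hgap Ia Ib hIab hIbn
    hno_cross ρn hρn
end

section
/- (CFL condition preserves particle ordering.) Let $v(\rho)=v_{\max}(1-\rho/\rho_{\max})$ and $v_+=\max(v,0)$. In the explicit Euler discretization $\mathtt x_i^{h+1} = \mathtt x_i^h \pm v_+(\ell/\Delta_i^h)\Delta t$ (where $\Delta_i^h$ denotes the relevant neighbor gap), if $\Delta t \le \ell/(\rho_{\max} v_{\max})$ then for each $h$ and $i$: $\mathtt x_{i+1}^h - \mathtt x_i^h \ge \ell/\rho_{\max}$ implies $\mathtt x_{i+1}^{h+1} - \mathtt x_i^{h+1} \ge \ell/\rho_{\max}$. In the key case (particle $i+1$ moving backward with speed $v_+(\ell/(\mathtt x_{i+1}^h-\mathtt x_i^h))$ and particle $i$ moving backward), this follows from $g - v(\ell/g)\Delta t \ge \ell/\rho_{\max}$ whenever $g\ge \ell/\rho_{\max}$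 and $\Delta t\le \ell/(\rho_{\max}v_{\max})$, where $g=\mathtt x_{i+1}^h-\mathtt x_i^h$. -/
/-- CFL condition preserving particle ordering for the fully discrete scheme with
affine velocity `v(ρ) = vmax (1 - ρ/ρmax)`: if `Δt ≤ ℓ/(ρmax vmax)`, a gap
`g ≥ ℓ/ρmax` satisfies `g - v(ℓ/g) Δt ≥ ℓ/ρmax`; consequently the updated gap of
two backward-moving particles remains at least `ℓ/ρmax`. -/
theorem stmt_10 (ℓ ρmax vmax Δt : ℝ)
    (hℓ : 0 < ℓ) (hρmax : 0 < ρmax) (hvmax : 0 < vmax)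
    (hΔt : 0 < Δt) (hCFL : Δt ≤ ℓ / (ρmax * vmax))
    (v : ℝ → ℝ) (hv : ∀ r, v r = vmax * (1 - r / ρmax)) :
    (∀ g : ℝ, ℓ / ρmax ≤ g → ℓ / ρmax ≤ g - v (ℓ / g) * Δt) ∧
    (∀ g g' : ℝ, ℓ / ρmax ≤ g → 0 < g' →
      ℓ / ρmax ≤ (g - max (v (ℓ / g)) 0 * Δt) + max (v (ℓ / g')) 0 * Δt) := by
  -- CFL in the form `vmax Δt ≤ ℓ/ρmax`
  have hvt : vmax * Δt ≤ ℓ / ρmax := by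
    have h := mul_le_mul_of_nonneg_left hCFL hvmax.le
    have he : vmax * (ℓ / (ρmax * vmax)) = ℓ / ρmax := by
      field_simp
    linarith [he ▸ h]
  have key : ∀ g : ℝ, ℓ / ρmax ≤ g → ℓ / ρmax ≤ g - v (ℓ / g) * Δt := by
    intro g hg
    have hg0 : 0 < g := lt_of_lt_of_le (by positivity) hg
    have hgρ : ℓ ≤ g * ρmax := by
      rw [div_le_iff₀ hρmax] at hg; linarith
    rw [hv]
    -- the factor `1 - (ℓ/g)/ρmax = (g ρmax - ℓ)/(g ρmax)` is nonnegative
    have hfac : 1 - (ℓ / g) / ρmax = (g * ρmax - ℓ) / (g * ρmax) := by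
      field_simp
    have hfnn : 0 ≤ (g * ρmax - ℓ) / (g * ρmax) :=
      div_nonneg (by linarith) (by positivity)
    have step1 : vmax * (1 - (ℓ / g) / ρmax) * Δt
        ≤ (ℓ / ρmax) * ((g * ρmax - ℓ) / (g * ρmax)) := by
      rw [hfac]
      calc vmax * ((g * ρmax - ℓ) / (g * ρmax)) * Δt
          = (vmax * Δt) * ((g * ρmax - ℓ) / (g * ρmax)) := by ring
        _ ≤ (ℓ / ρmax) * ((g * ρmax - ℓ) / (g * ρmax)) :=
            mul_le_mul_of_nonneg_right hvt hfnn
    have step2 : (ℓ / ρmax) * ((g * ρmax - ℓ) / (g * ρmax))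
        ≤ g * ((g * ρmax - ℓ) / (g * ρmax)) :=
      mul_le_mul_of_nonneg_right hg hfnn
    have step3 : g * ((g * ρmax - ℓ) / (g * ρmax)) = g - ℓ / ρmax := by
      field_simp
    linarith
  refine ⟨key, ?_⟩
  intro g g' hg hg'
  have h1 := key g hg
  have h2 : ℓ / ρmax ≤ g - max (v (ℓ / g)) 0 * Δt := by
    rcases le_or_gt (v (ℓ / g)) 0 with h | h
    · rw [max_eq_right h]; simpa using hg
    · rw [max_eq_left h.le]; exact h1
  have h3 : 0 ≤ max (v (ℓ / g')) 0 * Δt := mul_nonneg (le_max_right _ _) hΔt.le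
  linarith
end

section
/- (Formal turning-curve ODE.) Let $\rho(t,\cdot)$ be smooth on $[-1,1]$, $f(\rho)=\rho v(\rho)$, and suppose $\rho$ solves $\rho_t + (\mathrm{sign}(x-\xi(t)) f(\rho))_x = 0$, with $\rho(t,\xi(t)^\pm)=0$, and $\xi$ satisfies the linear-cost balance $2\xi(t) = \alpha\big(\int_{\xi(t)}^1\rho\,dy - \int_{-1}^{\xi(t)}\rho\,dy\big)$. Then differentiating in $t$ yields $\dot\xi(t) = \frac{\alpha}{2}\big(f(\rho(t,-1^+)) - f(\rho(t,1^-))\big)$. -/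
open intervalIntegral MeasureTheory Metric Filter

/-- Differentiating a parametric interval integral with fixed endpoints. -/
lemma param_deriv (ρ ρt : ℝ → ℝ → ℝ)
    (hcont : Continuous fun p : ℝ × ℝ => ρ p.1 p.2)
    (hcont_t : Continuous fun p : ℝ × ℝ => ρt p.1 p.2)
    (hdt : ∀ t x, HasDerivAt (fun s => ρ s x) (ρt t x) t)
    (a b t₀ : ℝ) :
    HasDerivAt (fun t => ∫ y in a..b, ρ t y) (∫ y in a..b, ρt t₀ y) t₀ := by
  have hρc : ∀ t, Continuous (ρ t) :=
    fun t => hcont.comp (continuous_const.prodMk continuous_id)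
  have hρtc : ∀ t, Continuous (ρt t) :=
    fun t => hcont_t.comp (continuous_const.prodMk continuous_id)
  obtain ⟨C, hC⟩ : ∃ C, ∀ p ∈ (Set.Icc (t₀ - 1) (t₀ + 1)) ×ˢ (Set.uIcc a b),
      ‖ρt p.1 p.2‖ ≤ C :=
    (isCompact_Icc.prod isCompact_uIcc).exists_bound_of_continuousOn hcont_t.continuousOn
  refine (intervalIntegral.hasDerivAt_integral_of_dominated_loc_of_deriv_le
    (F := fun t y => ρ t y) (F' := fun t y => ρt t y) (bound := fun _ => C)
    (Metric.ball_mem_nhds t₀ one_pos) ?_ ?_ ?_ ?_ ?_ ?_).2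
  · exact Filter.Eventually.of_forall fun t => ((hρc t).aestronglyMeasurable).restrict
  · exact (hρc t₀).intervalIntegrable a b
  · exact ((hρtc t₀).aestronglyMeasurable).restrict
  · refine Filter.Eventually.of_forall fun y hy t ht => hC (t, y) ?_
    constructor
    · rw [mem_ball, Real.dist_eq] at ht
      constructor <;> [linarith [abs_le.mp ht.le] ; linarith [(abs_le.mp ht.le).2]]
    · exact Set.uIoc_subset_uIcc hy
  · exact intervalIntegrable_const
  · exact Filter.Eventually.of_forall fun y _ t _ => hdt t y

/-- Moving endpoint with vanishing integrand at the endpoint: derivative zero. -/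
lemma moving_deriv (ρ : ℝ → ℝ → ℝ) (ξ : ℝ → ℝ) (ξ'₀ t₀ : ℝ)
    (hcont : Continuous fun p : ℝ × ℝ => ρ p.1 p.2)
    (hξd : HasDerivAt ξ ξ'₀ t₀)
    (htrace : ρ t₀ (ξ t₀) = 0) :
    HasDerivAt (fun t => ∫ y in (ξ t₀)..(ξ t), ρ t y) 0 t₀ := by
  rw [hasDerivAt_iff_isLittleO]
  simp only [intervalIntegral.integral_same, sub_zero, smul_zero]
  rw [Asymptotics.isLittleO_iff]
  intro c hc
  set M : ℝ := |ξ'₀| + 1 with hM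
  have hMpos : 0 < M := by positivity
  have h1 : ∀ᶠ t in nhds t₀, |ξ t - ξ t₀| ≤ M * |t - t₀| := by
    have := (hasDerivAt_iff_isLittleO.mp hξd).def one_pos
    filter_upwards [this] with t ht
    have : |ξ t - ξ t₀ - (t - t₀) * ξ'₀| ≤ |t - t₀| := by simpa [Real.norm_eq_abs] using ht
    have h2 : |(t - t₀) * ξ'₀| = |t - t₀| * |ξ'₀| := abs_mul _ _
    calc |ξ t - ξ t₀| = |(ξ t - ξ t₀ - (t - t₀) * ξ'₀) + (t - t₀) * ξ'₀| := by ring_nf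
      _ ≤ |ξ t - ξ t₀ - (t - t₀) * ξ'₀| + |(t - t₀) * ξ'₀| := abs_add_le _ _
      _ ≤ |t - t₀| + |t - t₀| * |ξ'₀| := by rw [h2]; linarith
      _ = M * |t - t₀| := by ring
  have htend : Filter.Tendsto (fun p : ℝ × ℝ => ρ p.1 p.2) (nhds (t₀, ξ t₀)) (nhds 0) := by
    have := hcont.continuousAt (x := (t₀, ξ t₀)); rwa [ContinuousAt, htrace] at this
  have h2 : ∀ᶠ p : ℝ × ℝ in nhds (t₀, ξ t₀), |ρ p.1 p.2| < c / M := by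
    have : Set.Iio (c / M) ∈ nhds (|(0:ℝ)|) := by
      apply Iio_mem_nhds; simpa using div_pos hc hMpos
    exact (htend.comp tendsto_id).abs (by simpa using this)
  obtain ⟨δ, hδpos, hδ⟩ := Metric.eventually_nhds_iff_ball.mp h2
  have h4 : ∀ᶠ t in nhds t₀, dist (ξ t) (ξ t₀) < δ :=
    hξd.continuousAt (Metric.ball_mem_nhds _ hδpos)
  have h5 : ∀ᶠ t in nhds t₀, dist t t₀ < δ :=
    eventually_nhds_iff_ball.mpr ⟨δ, hδpos, fun t ht => ht⟩
  filter_upwards [h1, h4, h5] with t ht1 ht4 ht5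
  have hbnd : ∀ y ∈ Set.uIoc (ξ t₀) (ξ t), ‖ρ t y‖ ≤ c / M := by
    intro y hy
    have hy1 : min (ξ t₀) (ξ t) < y := hy.1
    have hy2 : y ≤ max (ξ t₀) (ξ t) := hy.2
    have hyd : |y - ξ t₀| ≤ |ξ t - ξ t₀| := by
      rw [abs_sub_le_iff]
      rcases le_total (ξ t₀) (ξ t) with h | h
      · constructor <;> [skip ; skip] <;>
          simp [min_eq_left h, max_eq_right h] at hy1 hy2 <;> nlinarith [abs_nonneg (ξ t - ξ t₀), le_abs_self (ξ t - ξ t₀)]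
      · constructor <;>
          simp [min_eq_right h, max_eq_left h] at hy1 hy2 <;> nlinarith [neg_abs_le (ξ t - ξ t₀)]
    refine le_of_lt (hδ (t, y) ?_)
    rw [mem_ball, Prod.dist_eq, max_lt_iff]
    rw [Real.dist_eq] at *
    exact ⟨ht5, lt_of_le_of_lt hyd ht4⟩
  calc ‖∫ y in (ξ t₀)..(ξ t), ρ t y‖ ≤ (c / M) * |ξ t - ξ t₀| :=
        intervalIntegral.norm_integral_le_of_norm_le_const hbnd
    _ ≤ (c / M) * (M * |t - t₀|) := by
        apply mul_le_mul_of_nonneg_left ht1 (le_of_lt (div_pos hc hMpos))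
    _ = c * ‖t - t₀‖ := by field_simp [Real.norm_eq_abs]; exact (Real.norm_eq_abs _).symm

open intervalIntegral

/-- Formal turning-curve ODE for classical well-separated solutions of the Hughes
model with linear cost: `ξ̇(t) = (α/2)(f(ρ(t,-1)) - f(ρ(t,1)))`, `f(ρ)=ρ v(ρ)`. -/
theorem stmt_16 (α : ℝ) (hα : 0 ≤ α)
    (v : ℝ → ℝ) (hv : Differentiable ℝ v)
    (ρ ρt ρx : ℝ → ℝ → ℝ) (ξ ξ' : ℝ → ℝ)
    (hcont : Continuous fun p : ℝ × ℝ => ρ p.1 p.2)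
    (hcont_t : Continuous fun p : ℝ × ℝ => ρt p.1 p.2)
    (hdt : ∀ t x, HasDerivAt (fun s => ρ s x) (ρt t x) t)
    (hdx : ∀ t x, HasDerivAt (fun y => ρ t y) (ρx t x) x)
    (hξd : ∀ t, HasDerivAt ξ (ξ' t) t)
    (hξmem : ∀ t, ξ t ∈ Set.Ioo (-1:ℝ) 1)
    (hPDE : ∀ t, ∀ x ∈ Set.Icc (-1:ℝ) 1, x ≠ ξ t →
      ρt t x + Real.sign (x - ξ t) * (deriv (fun r => r * v r) (ρ t x)) * ρx t x = 0)
    (htrace : ∀ t, ρ t (ξ t) = 0)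
    (hbal : ∀ t, 2 * ξ t =
      α * ((∫ y in (ξ t)..(1:ℝ), ρ t y) - ∫ y in (-1:ℝ)..(ξ t), ρ t y)) :
    ∀ t, ξ' t = α / 2 * ((ρ t (-1)) * v (ρ t (-1)) - (ρ t 1) * v (ρ t 1)) := by
  intro t₀
  obtain ⟨hξl, hξr⟩ := hξmem t₀
  have hρc : ∀ t, Continuous (ρ t) :=
    fun t => hcont.comp (continuous_const.prodMk continuous_id)
  have hρtc : ∀ t, Continuous (ρt t) :=
    fun t => hcont_t.comp (continuous_const.prodMk continuous_id)
  -- f and chain rule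
  have hf : Differentiable ℝ (fun r : ℝ => r * v r) := differentiable_id.mul hv
  set g : ℝ → ℝ := fun y => ρ t₀ y * v (ρ t₀ y) with hg_def
  set G : ℝ → ℝ := fun y => deriv (fun r : ℝ => r * v r) (ρ t₀ y) * ρx t₀ y with hG_def
  have hg : ∀ y, HasDerivAt g (G y) y := by
    intro y
    exact (hf (ρ t₀ y)).hasDerivAt.comp y (hdx t₀ y)
  have hgξ : g (ξ t₀) = 0 := by simp [hg_def, htrace t₀]
  have hae : ∀ᵐ y : ℝ, y ≠ ξ t₀ := by
    rw [MeasureTheory.ae_iff]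
    simpa using MeasureTheory.measure_mono_null
      (by intro x hx; simp at hx ⊢; exact hx) (Real.volume_singleton (a := ξ t₀))
  -- left: on Ι (-1) (ξ t₀) = Ioc (-1) (ξ t₀), ρt t₀ = G except at ξ t₀
  have hIocL : Set.uIoc (-1:ℝ) (ξ t₀) = Set.Ioc (-1) (ξ t₀) := Set.uIoc_of_le hξl.le
  have hcongrL : ∀ᵐ y : ℝ, y ∈ Set.uIoc (-1:ℝ) (ξ t₀) → ρt t₀ y = G y := by
    filter_upwards [hae] with y hy hymem
    rw [hIocL] at hymem
    have hylt : y < ξ t₀ := lt_of_le_of_ne hymem.2 hy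
    have hPDEy := hPDE t₀ y ⟨hymem.1.le, hylt.le.trans hξr.le⟩ hy
    rw [Real.sign_of_neg (by linarith)] at hPDEy
    simp only [hG_def]; linarith
  have hintG_L : IntervalIntegrable G MeasureTheory.volume (-1) (ξ t₀) := by
    refine ((hρtc t₀).intervalIntegrable _ _).congr_ae ?_
    exact (MeasureTheory.ae_restrict_iff' measurableSet_uIoc).mpr hcongrL
  have hL : (∫ y in (-1:ℝ)..(ξ t₀), ρt t₀ y) = - g (-1) := by
    rw [intervalIntegral.integral_congr_ae hcongrL,
      intervalIntegral.integral_eq_sub_of_hasDerivAt (fun y _ => hg y) hintG_L, hgξ]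
    ring
  -- right: on Ι (ξ t₀) 1 = Ioc (ξ t₀) 1, ρt t₀ = -G
  have hIocR : Set.uIoc (ξ t₀) (1:ℝ) = Set.Ioc (ξ t₀) 1 := Set.uIoc_of_le hξr.le
  have hcongrR : ∀ᵐ y : ℝ, y ∈ Set.uIoc (ξ t₀) (1:ℝ) → ρt t₀ y = -G y := by
    filter_upwards with y hymem
    rw [hIocR] at hymem
    have hygt : ξ t₀ < y := hymem.1
    have hPDEy := hPDE t₀ y ⟨(hξl.trans hygt).le, hymem.2⟩ (ne_of_gt hygt)
    rw [Real.sign_of_pos (by linarith)] at hPDEy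
    simp only [hG_def]; linarith
  have hintG_R : IntervalIntegrable (fun y => -G y) MeasureTheory.volume (ξ t₀) 1 := by
    refine ((hρtc t₀).intervalIntegrable _ _).congr_ae ?_
    exact (MeasureTheory.ae_restrict_iff' measurableSet_uIoc).mpr hcongrR
  have hR : (∫ y in (ξ t₀)..(1:ℝ), ρt t₀ y) = - g 1 := by
    rw [intervalIntegral.integral_congr_ae hcongrR,
      intervalIntegral.integral_eq_sub_of_hasDerivAt (fun y _ => (hg y).neg) hintG_R, Pi.neg_apply, Pi.neg_apply, hgξ]
    ring
  -- derivative of A(t) = ∫_{-1}^{ξ t} ρ t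
  have hsplitA : (fun t => ∫ y in (-1:ℝ)..(ξ t), ρ t y)
      = fun t => (∫ y in (-1:ℝ)..(ξ t₀), ρ t y) + ∫ y in (ξ t₀)..(ξ t), ρ t y := by
    funext t
    rw [intervalIntegral.integral_add_adjacent_intervals
      ((hρc t).intervalIntegrable _ _) ((hρc t).intervalIntegrable _ _)]
  have hA : HasDerivAt (fun t => ∫ y in (-1:ℝ)..(ξ t), ρ t y)
      (∫ y in (-1:ℝ)..(ξ t₀), ρt t₀ y) t₀ := by
    rw [hsplitA]
    have := (param_deriv ρ ρt hcont hcont_t hdt (-1) (ξ t₀) t₀).add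
      (moving_deriv ρ ξ (ξ' t₀) t₀ hcont (hξd t₀) (htrace t₀))
    rw [add_zero] at this
    exact this
  -- derivative of B(t) = ∫_{ξ t}^{1} ρ t
  have hsplitB : (fun t => ∫ y in (ξ t)..(1:ℝ), ρ t y)
      = fun t => (∫ y in (-1:ℝ)..(1:ℝ), ρ t y) - ∫ y in (-1:ℝ)..(ξ t), ρ t y := by
    funext t
    rw [eq_sub_iff_add_eq, add_comm, intervalIntegral.integral_add_adjacent_intervals
      ((hρc t).intervalIntegrable _ _) ((hρc t).intervalIntegrable _ _)]
  have hB : HasDerivAt (fun t => ∫ y in (ξ t)..(1:ℝ), ρ t y)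
      ((∫ y in (-1:ℝ)..(1:ℝ), ρt t₀ y) - ∫ y in (-1:ℝ)..(ξ t₀), ρt t₀ y) t₀ := by
    rw [hsplitB]
    exact (param_deriv ρ ρt hcont hcont_t hdt (-1) 1 t₀).sub hA
  -- differentiate the balance relation
  have hfun : (fun t => 2 * ξ t)
      = fun t => α * ((∫ y in (ξ t)..(1:ℝ), ρ t y) - ∫ y in (-1:ℝ)..(ξ t), ρ t y) :=
    funext hbal
  have hLHS : HasDerivAt (fun t => 2 * ξ t) (2 * ξ' t₀) t₀ := (hξd t₀).const_mul 2
  have hRHS : HasDerivAt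
      (fun t => α * ((∫ y in (ξ t)..(1:ℝ), ρ t y) - ∫ y in (-1:ℝ)..(ξ t), ρ t y))
      (α * (((∫ y in (-1:ℝ)..(1:ℝ), ρt t₀ y) - ∫ y in (-1:ℝ)..(ξ t₀), ρt t₀ y)
        - ∫ y in (-1:ℝ)..(ξ t₀), ρt t₀ y)) t₀ := (hB.sub hA).const_mul α
  rw [hfun] at hLHS
  have huniq := hLHS.unique hRHS
  -- evaluate the integrals
  have hsplit : (∫ y in (-1:ℝ)..(1:ℝ), ρt t₀ y)
      = (∫ y in (-1:ℝ)..(ξ t₀), ρt t₀ y) + ∫ y in (ξ t₀)..(1:ℝ), ρt t₀ y :=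
    (intervalIntegral.integral_add_adjacent_intervals
      ((hρtc t₀).intervalIntegrable _ _) ((hρtc t₀).intervalIntegrable _ _)).symm
  rw [hsplit, hL, hR] at huniq
  have hgm1 : g (-1) = ρ t₀ (-1) * v (ρ t₀ (-1)) := rfl
  have hg1 : g 1 = ρ t₀ 1 * v (ρ t₀ 1) := rfl
  rw [hgm1, hg1] at huniq
  linarith
end
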